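/- For the simply-typed source language STL, the call-by-name CPS-translation preserves typing: if Γ ⊢ t : X is derivable in STL, then Γ̄ ⊢ t̄ : X̄→⊥ is derivable, where Γ̄ replaces each declaration x : Xᵢ by x : (X̄ᵢ → ⊥), X̄ is the continuation type defined by 1̄ = ¬1, ℕ̄ = ¬ℕ, and (X→Y)̄ = ¬X̄-lifted × Ȳ (i.e., (¬(X̄→⊥)) × Ȳ), and t̄ is the CPS-translated term. -/
import Mathlib


/- ## The source language and its CPS-translation. -/

/-- Types of the extended source language (with products and ⊥),
    the target of the CPS-translation. -/
inductive STy : Type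
  | one | nat | bot
  | arrow (X Y : STy)
  | prod (X Y : STy)
  deriving DecidableEq, Repr

/-- Terms of the extended source language (de Bruijn). -/
inductive STm : Type
  | var (n : Nat) | star | num (n : Nat)
  | lam (t : STm)
  | app (s t : STm)
  | add (s t : STm)
  | ifz (s t u : STm)
  | pair (s t : STm)
  | letPair (s t : STm)  -- binds vars 0,1 in the second argument
  deriving DecidableEq, Repr

namespace STm
def lift (d c : Nat) : STm → STm
  | var n => if n < c then var n else var (n + d)
  | star => star
  | num n => num n
  | lam t => lam (lift d (c + 1) t)
  | app s t => app (lift d c s) (lift d c t)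
  | add s t => add (lift d c s) (lift d c t)
  | ifz s t u => ifz (lift d c s) (lift d c t) (lift d c u)
  | pair s t => pair (lift d c s) (lift d c t)
  | letPair s t => letPair (lift d c s) (lift d (c + 2) t)
end STm

/-- Typing of the extended source language: simply-typed λ-calculus with
    `1`, `ℕ`, `⊥`, products and functions. -/
inductive SHasTy : List STy → STm → STy → Prop
  | var {Γ n X} : Γ[n]? = some X → SHasTy Γ (.var n) X
  | star {Γ} : SHasTy Γ .star .one
  | num {Γ n} : SHasTy Γ (.num n) .nat
  | lam {Γ X Y t} : SHasTy (X :: Γ) t Y → SHasTy Γ (.lam t) (.arrow X Y)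
  | app {Γ X Y s t} : SHasTy Γ s (.arrow X Y) → SHasTy Γ t X → SHasTy Γ (.app s t) Y
  | add {Γ s t} : SHasTy Γ s .nat → SHasTy Γ t .nat → SHasTy Γ (.add s t) .nat
  | ifz {Γ C s t u} : SHasTy Γ s .nat → SHasTy Γ t C → SHasTy Γ u C →
      SHasTy Γ (.ifz s t u) C
  | pair {Γ X Y s t} : SHasTy Γ s X → SHasTy Γ t Y → SHasTy Γ (.pair s t) (.prod X Y)
  | letPair {Γ X Y Z s t} : SHasTy Γ s (.prod X Y) → SHasTy (X :: Y :: Γ) t Z →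
      SHasTy Γ (.letPair s t) Z

/-- η-expansion `η(t, X)`. -/
def eta : STy → STm → STm
  | .one, t => t
  | .nat, t => t
  | .bot, t => t
  | .prod X Y, t => .letPair t (.pair (eta X (.var 0)) (eta Y (.var 1)))
  | .arrow X Y, t => .lam (eta Y (.app (t.lift 1 0) (eta X (.var 0))))

/-- Types of the source language proper (STL / LIN / CORE). -/
inductive STy0 : Type
  | one | nat
  | arrow (X Y : STy0)
  deriving DecidableEq, Repr

/-- Terms of the source language proper (de Bruijn). -/
inductive STm0 : Type
  | var (n : Nat) | star | num (n : Nat)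
  | lam (X : STy0) (t : STm0)
  | app (s t : STm0)
  | add (s t : STm0)
  | ifz (s t u : STm0)
  deriving DecidableEq, Repr

namespace STm0
def lift (d c : Nat) : STm0 → STm0
  | var n => if n < c then var n else var (n + d)
  | star => star
  | num n => num n
  | lam X t => lam X (lift d (c + 1) t)
  | app s t => app (lift d c s) (lift d c t)
  | add s t => add (lift d c s) (lift d c t)
  | ifz s t u => ifz (lift d c s) (lift d c t) (lift d c u)

/-- Swap variables `i` and `i+1`. -/
def swap (i : Nat) : STm0 → STm0
  | var n => if n = i then var (i + 1) else if n = i + 1 then var i else var n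
  | star => star
  | num n => num n
  | lam X t => lam X (swap (i + 1) t)
  | app s t => app (swap i s) (swap i t)
  | add s t => add (swap i s) (swap i t)
  | ifz s t u => ifz (swap i s) (swap i t) (swap i u)

/-- Substitute the closed term `v` for variable `k`. -/
def subst (k : Nat) (v : STm0) : STm0 → STm0
  | var n => if n = k then v else if k < n then var (n - 1) else var n
  | star => star
  | num n => num n
  | lam X t => lam X (subst (k + 1) v t)
  | app s t => app (subst k v s) (subst k v t)
  | add s t => add (subst k v s) (subst k v t)
  | ifz s t u => ifz (subst k v s) (subst k v t) (subst k v u)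

/-- Contract variables `i` and `i+1` into the single variable `i`. -/
def contract (i : Nat) : STm0 → STm0
  | var n => if n = i + 1 then var i else if i + 1 < n then var (n - 1) else var n
  | star => star
  | num n => num n
  | lam X t => lam X (contract (i + 1) t)
  | app s t => app (contract i s) (contract i t)
  | add s t => add (contract i s) (contract i t)
  | ifz s t u => ifz (contract i s) (contract i t) (contract i u)
end STm0

/-- The continuation type `X̄`:  `1̄ = ¬1`, `ℕ̄ = ¬ℕ`, `(X→Y)̄ = ¬X̄ × Ȳ`. -/
def cpsTy : STy0 → STy
  | .one => .arrow .one .bot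
  | .nat => .arrow .nat .bot
  | .arrow X Y => .prod (.arrow (cpsTy X) .bot) (cpsTy Y)

/-- `X̄ → ⊥`, the type of CPS-translated terms of type `X`. -/
def ovl (X : STy0) : STy := .arrow (cpsTy X) .bot

/-- The call-by-name CPS-translation (Hofmann–Streicher style, with
    η-expansion at variables), Figure 4. -/
def cps (Γ : List STy0) : STm0 → STm
  | .var n => eta (ovl (Γ.getD n .one)) (.var n)
  | .star => .lam (.app (.var 0) .star)
  | .num n => .lam (.app (.var 0) (.num n))
  | .lam X t => .lam (.letPair (.var 0) (.app ((cps (X :: Γ) t).lift 2 1) (.var 1)))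
  | .app s t => .lam (.app ((cps Γ s).lift 1 0) (.pair ((cps Γ t).lift 1 0) (.var 0)))
  | .add s t =>
      .lam (.app ((cps Γ s).lift 1 0)
        (.lam (.app ((cps Γ t).lift 2 0)
          (.lam (.app (.var 2) (.add (.var 1) (.var 0)))))))
  | .ifz s t u =>
      .lam (.app ((cps Γ s).lift 1 0)
        (.lam (.ifz (.var 0)
          (.app ((cps Γ t).lift 2 0) (.lam (.app (.var 2) (.var 0))))
          (.app ((cps Γ u).lift 2 0) (.lam (.app (.var 2) (.var 0)))))))

/-- STL typing: simply-typed λ-calculus with `1`, `ℕ` and functions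
    (Figures 2, 3 and contraction). -/
inductive SHasTy0 : List STy0 → STm0 → STy0 → Prop
  | var {Γ n X} : Γ[n]? = some X → SHasTy0 Γ (.var n) X
  | star {Γ} : SHasTy0 Γ .star .one
  | num {Γ n} : SHasTy0 Γ (.num n) .nat
  | lam {Γ X Y t} : SHasTy0 (X :: Γ) t Y → SHasTy0 Γ (.lam X t) (.arrow X Y)
  | app {Γ X Y s t} : SHasTy0 Γ s (.arrow X Y) → SHasTy0 Γ t X → SHasTy0 Γ (.app s t) Y
  | add {Γ s t} : SHasTy0 Γ s .nat → SHasTy0 Γ t .nat → SHasTy0 Γ (.add s t) .nat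
  | ifz {Γ s t u} : SHasTy0 Γ s .nat → SHasTy0 Γ t .nat → SHasTy0 Γ u .nat →
      SHasTy0 Γ (.ifz s t u) .nat

/-- Linear typing for the fragment LIN (Figures 2 and 3, no contraction).
    The head of the context is the most recently bound variable. -/
inductive Lin : List STy0 → STm0 → STy0 → Prop
  | ax {X} : Lin [X] (.var 0) X
  | star : Lin [] .star .one
  | num {n} : Lin [] (.num n) .nat
  | weak {Γ t Y X} : Lin Γ t Y → Lin (Γ ++ [X]) t Y
  | exch {Γ Δ : List STy0} {X Y t Z} : Lin (Γ ++ X :: Y :: Δ) t Z →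
      Lin (Γ ++ Y :: X :: Δ) (t.swap Γ.length) Z
  | lam {Γ X Y t} : Lin (X :: Γ) t Y → Lin Γ (.lam X t) (.arrow X Y)
  | app {Γ Δ X Y s t} : Lin Γ s (.arrow X Y) → Lin Δ t X →
      Lin (Δ ++ Γ) (.app (s.lift Δ.length 0) t) Y
  | add {Γ Δ s t} : Lin Γ s .nat → Lin Δ t .nat →
      Lin (Δ ++ Γ) (.add (s.lift Δ.length 0) t) .nat
  | ifz {Γ Δ1 Δ2 s t1 t2} : Lin Γ s .nat → Lin Δ1 t1 .nat → Lin Δ2 t2 .nat →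
      Lin (Δ2 ++ Δ1 ++ Γ)
        (.ifz (s.lift (Δ1.length + Δ2.length) 0) (t1.lift Δ2.length 0) t2) .nat

/-- CORE types: only `1` and function types. -/
def STy0.IsCore : STy0 → Prop
  | .one => True
  | .nat => False
  | .arrow X Y => X.IsCore ∧ Y.IsCore

/-- Linear typing for the fragment CORE (Figure 2 only). -/
inductive LinCore : List STy0 → STm0 → STy0 → Prop
  | ax {X} : X.IsCore → LinCore [X] (.var 0) X
  | star : LinCore [] .star .one
  | weak {Γ t Y X} : X.IsCore → LinCore Γ t Y → LinCore (Γ ++ [X]) t Y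
  | exch {Γ Δ : List STy0} {X Y t Z} : LinCore (Γ ++ X :: Y :: Δ) t Z →
      LinCore (Γ ++ Y :: X :: Δ) (t.swap Γ.length) Z
  | lam {Γ X Y t} : X.IsCore → LinCore (X :: Γ) t Y → LinCore Γ (.lam X t) (.arrow X Y)
  | app {Γ Δ X Y s t} : LinCore Γ s (.arrow X Y) → LinCore Δ t X →
      LinCore (Δ ++ Γ) (.app (s.lift Δ.length 0) t) Y

theorem SHasTy.weaken {Γ t X} (h : SHasTy Γ t X) :
    ∀ Γ₁ Γ₂ Δ : List STy, Γ = Γ₁ ++ Γ₂ →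
      SHasTy (Γ₁ ++ Δ ++ Γ₂) (t.lift Δ.length Γ₁.length) X := by
  induction h with
  | @var Γ n X hn =>
    intro Γ₁ Γ₂ Δ hΓ
    subst hΓ
    simp only [STm.lift]
    split
    · apply SHasTy.var
      rename_i hlt
      rw [List.getElem?_append, if_pos hlt] at hn
      rw [List.append_assoc, List.getElem?_append, if_pos hlt, hn]
    · apply SHasTy.var
      rename_i hge
      push_neg at hge
      rw [List.getElem?_append, if_neg (by omega)] at hn
      rw [List.append_assoc, List.getElem?_append, if_neg (by omega),
        List.getElem?_append, if_neg (by omega)]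
      try simp only [List.length_append]
      convert hn using 2
      omega
  | star => intro _ _ _ _; exact SHasTy.star
  | num => intro _ _ _ _; exact SHasTy.num
  | @lam Γ X Y t _ ih =>
    intro Γ₁ Γ₂ Δ hΓ
    exact SHasTy.lam (ih (X :: Γ₁) Γ₂ Δ (by simp [hΓ]))
  | app _ _ ih1 ih2 =>
    intro Γ₁ Γ₂ Δ hΓ
    exact SHasTy.app (ih1 Γ₁ Γ₂ Δ hΓ) (ih2 Γ₁ Γ₂ Δ hΓ)
  | add _ _ ih1 ih2 =>
    intro Γ₁ Γ₂ Δ hΓ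
    exact SHasTy.add (ih1 Γ₁ Γ₂ Δ hΓ) (ih2 Γ₁ Γ₂ Δ hΓ)
  | ifz _ _ _ ih1 ih2 ih3 =>
    intro Γ₁ Γ₂ Δ hΓ
    exact SHasTy.ifz (ih1 Γ₁ Γ₂ Δ hΓ) (ih2 Γ₁ Γ₂ Δ hΓ) (ih3 Γ₁ Γ₂ Δ hΓ)
  | pair _ _ ih1 ih2 =>
    intro Γ₁ Γ₂ Δ hΓ
    exact SHasTy.pair (ih1 Γ₁ Γ₂ Δ hΓ) (ih2 Γ₁ Γ₂ Δ hΓ)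
  | @letPair Γ X Y Z s t _ _ ih1 ih2 =>
    intro Γ₁ Γ₂ Δ hΓ
    exact SHasTy.letPair (ih1 Γ₁ Γ₂ Δ hΓ) (ih2 (X :: Y :: Γ₁) Γ₂ Δ (by simp [hΓ]))

theorem SHasTy.weaken1 {Γ t X} (h : SHasTy Γ t X) (A : STy) :
    SHasTy (A :: Γ) (t.lift 1 0) X :=
  h.weaken [] Γ [A] rfl

theorem SHasTy.eta {X : STy} : ∀ {Γ t}, SHasTy Γ t X → SHasTy Γ (eta X t) X := by
  induction X with
  | one => intro _ _ h; exact h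
  | nat => intro _ _ h; exact h
  | bot => intro _ _ h; exact h
  | arrow X Y ihX ihY =>
    intro Γ t h
    exact SHasTy.lam (ihY (SHasTy.app (h.weaken1 X) (ihX (SHasTy.var (by simp [cpsTy] <;> first | rfl | exact ⟨rfl, rfl⟩)))))
  | prod X Y ihX ihY =>
    intro Γ t h
    exact SHasTy.letPair h
      (SHasTy.pair (ihX (SHasTy.var (by simp [cpsTy] <;> first | rfl | exact ⟨rfl, rfl⟩))) (ihY (SHasTy.var (by simp [cpsTy] <;> first | rfl | exact ⟨rfl, rfl⟩))))

theorem ovl_eq (X : STy0) : ovl X = .arrow (cpsTy X) .bot := rfl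

/-- the call-by-name CPS-translation preserves typing:
    if `Γ ⊢ t : X` in STL then `Γ̄ ⊢ t̄ : X̄ → ⊥`, where each declaration
    `x : Xᵢ` becomes `x : X̄ᵢ → ⊥`. -/
theorem cps_preserves_typing (Γ : List STy0) (t : STm0) (X : STy0)
    (h : SHasTy0 Γ t X) :
    SHasTy (Γ.map ovl) (cps Γ t) (ovl X) := by
  induction h with
  | @var Γ n X hn =>
    have hd : Γ.getD n .one = X := by
      rw [List.getD_eq_getElem?_getD, hn]; rfl
    simp only [cps, hd]
    exact SHasTy.eta (SHasTy.var (by rw [List.getElem?_map, hn]; rfl))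
  | star => exact SHasTy.lam (SHasTy.app (SHasTy.var (by simp [cpsTy] <;> first | rfl | exact ⟨rfl, rfl⟩)) SHasTy.star)
  | num => exact SHasTy.lam (SHasTy.app (SHasTy.var (by simp [cpsTy] <;> first | rfl | exact ⟨rfl, rfl⟩)) SHasTy.num)
  | @lam Γ X Y t _ ih =>
    refine SHasTy.lam (SHasTy.letPair (SHasTy.var (by simp [cpsTy] <;> first | rfl | exact ⟨rfl, rfl⟩)) ?_)
    refine SHasTy.app ?_ (SHasTy.var (by simp [cpsTy] <;> first | rfl | exact ⟨rfl, rfl⟩))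
    exact ih.weaken [ovl X] (Γ.map ovl) [cpsTy Y, cpsTy (.arrow X Y)] rfl
  | @app Γ X Y s t _ _ ihs iht =>
    refine SHasTy.lam (SHasTy.app (ihs.weaken1 _) ?_)
    exact SHasTy.pair (iht.weaken1 _) (SHasTy.var (by simp [cpsTy] <;> first | rfl | exact ⟨rfl, rfl⟩))
  | @add Γ s t _ _ ihs iht =>
    refine SHasTy.lam (SHasTy.app (ihs.weaken1 _) (SHasTy.lam (SHasTy.app
      (iht.weaken [] (Γ.map ovl) [.nat, cpsTy .nat] rfl) (SHasTy.lam
      (SHasTy.app (SHasTy.var (by simp [cpsTy] <;> first | rfl | exact ⟨rfl, rfl⟩)) (SHasTy.add (SHasTy.var (by simp [cpsTy] <;> first | rfl | exact ⟨rfl, rfl⟩)) (SHasTy.var (by simp [cpsTy] <;> first | rfl | exact ⟨rfl, rfl⟩))))))))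
  | @ifz Γ s t u _ _ _ ihs iht ihu =>
    refine SHasTy.lam (SHasTy.app (ihs.weaken1 _) (SHasTy.lam (SHasTy.ifz
      (SHasTy.var (by simp [cpsTy] <;> first | rfl | exact ⟨rfl, rfl⟩)) ?_ ?_)))
    · exact SHasTy.app (iht.weaken [] (Γ.map ovl) [.nat, cpsTy .nat] rfl)
        (SHasTy.lam (SHasTy.app (SHasTy.var (by simp [cpsTy] <;> first | rfl | exact ⟨rfl, rfl⟩)) (SHasTy.var (by simp [cpsTy] <;> first | rfl | exact ⟨rfl, rfl⟩))))
    · exact SHasTy.app (ihu.weaken [] (Γ.map ovl) [.nat, cpsTy .nat] rfl)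
        (SHasTy.lam (SHasTy.app (SHasTy.var (by simp [cpsTy] <;> first | rfl | exact ⟨rfl, rfl⟩)) (SHasTy.var (by simp [cpsTy] <;> first | rfl | exact ⟨rfl, rfl⟩))))
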